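/- K₁ is a first integral of its own Hamiltonian flow: the derivative of K₁ along the Hamiltonian vector field dq₁/dt = ∂K₁/∂p₁, dp₁/dt = −∂K₁/∂q₁, dq₂/dt = ∂K₁/∂p₂, dp₂/dt = −∂K₁/∂q₂ vanishes identically, and K₂ is also a first integral of this flow (equivalent to {K₁,K₂} = 0). -/
import Mathlib


open MvPolynomial

/-- Variables: X 0 = q₁, X 1 = p₁, X 2 = q₂, X 3 = p₂. -/
noncomputable def K1 (α₂ α₃ : ℂ) : MvPolynomial (Fin 4) ℂ :=
  X 0 ^ 2 * X 1 - X 1 ^ 2 + C α₂ * X 0 - C (1/2 : ℂ) * X 2 ^ 2 * X 3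
    - C (1/2 : ℂ) * X 3 ^ 2 - C (α₃ / 2) * X 2 + C (3/2 : ℂ) * X 1 * X 3

noncomputable def K2 (α₁ α₂ α₃ : ℂ) : MvPolynomial (Fin 4) ℂ :=
  -C (α₃ ^ 2) * X 1 + X 2 ^ 4 * X 3 ^ 2 + 2 * X 2 ^ 2 * X 3 ^ 3 + X 3 ^ 4
    + C (2 * α₃) * X 2 ^ 3 * X 3 + C (4 * (α₁ + α₃)) * X 2 * X 3 ^ 2
    + C (α₃ ^ 2) * X 2 ^ 2 + C (α₃ * (2 * α₁ + α₃)) * X 3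
    - X 3 * (8 * X 0 * X 1 * X 2 * X 3 + 6 * X 1 * X 2 ^ 2 * X 3
      + 4 * X 0 ^ 2 * X 1 * X 3 + 2 * X 1 * X 3 ^ 2 - X 1 ^ 2 * X 3
      + C (4 * α₂) * X 0 * X 3 + C (4 * α₃) * X 0 * X 1 + C (6 * α₃) * X 1 * X 2)

/-- The Poisson bracket {F,G} = ∂F/∂p₁·∂G/∂q₁ − ∂F/∂q₁·∂G/∂p₁
                              + ∂F/∂p₂·∂G/∂q₂ − ∂F/∂q₂·∂G/∂p₂. -/
noncomputable def pbr (F G : MvPolynomial (Fin 4) ℂ) : MvPolynomial (Fin 4) ℂ :=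
  pderiv 1 F * pderiv 0 G - pderiv 0 F * pderiv 1 G
    + pderiv 3 F * pderiv 2 G - pderiv 2 F * pderiv 3 G

lemma pderiv_two (i : Fin 4) : pderiv i (2 : MvPolynomial (Fin 4) ℂ) = 0 := by
  rw [show (2 : MvPolynomial (Fin 4) ℂ) = C 2 from rfl, pderiv_C]
lemma pderiv_four (i : Fin 4) : pderiv i (4 : MvPolynomial (Fin 4) ℂ) = 0 := by
  rw [show (4 : MvPolynomial (Fin 4) ℂ) = C 4 from rfl, pderiv_C]
lemma pderiv_six (i : Fin 4) : pderiv i (6 : MvPolynomial (Fin 4) ℂ) = 0 := by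
  rw [show (6 : MvPolynomial (Fin 4) ℂ) = C 6 from rfl, pderiv_C]
lemma pderiv_eight (i : Fin 4) : pderiv i (8 : MvPolynomial (Fin 4) ℂ) = 0 := by
  rw [show (8 : MvPolynomial (Fin 4) ℂ) = C 8 from rfl, pderiv_C]

set_option maxHeartbeats 4000000 in
/-- K₁ and K₂ are first integrals of the Hamiltonian flow of K₁:
their derivatives {F, K₁} along the flow vanish. -/
theorem K1_K2_first_integrals (α₁ α₂ α₃ : ℂ)
    (hrel : 2 * α₁ + 2 * α₂ + α₃ = 0) :
    pbr (K1 α₂ α₃) (K1 α₂ α₃) = 0 ∧ pbr (K2 α₁ α₂ α₃) (K1 α₂ α₃) = 0 := by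
  have hα₂ : α₂ = -α₁ - α₃/2 := by linear_combination hrel / 2
  subst hα₂
  constructor <;>
  · simp [pbr, K1, K2, pderiv_mul, Derivation.leibniz_pow, pderiv_X,
      pderiv_two, pderiv_four, pderiv_six, pderiv_eight, Pi.single_apply, smul_eq_mul]
    apply MvPolynomial.funext
    intro x
    simp only [map_add, map_sub, map_neg, map_mul, map_pow, eval_C, eval_X,
      map_ofNat, map_zero, map_one]
    ring
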